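/- Under the fairness assumption and the winner-determination rule of Causal-PIBT, when several requesting agents contest the same unoccupied node, exactly one agent (the one with maximal temporal priority among them, which is unique since ties are broken by unique original priorities within distinct trees) becomes extended toward that node and all other contestants revert to contracted; hence at most one agent can ever be extended toward a given node at a time. -/

import Mathlib

inductive Mode where
  | contracted | requesting | extended
deriving DecidableEq

structure Config (A V P : Type*) where
  mode : A → Mode
  tail : A → V
  head : A → Option V
  ptmp : A → P

def occupied {A V P : Type*} (c : Config A V P) (v : V) : Prop :=
  (∃ j, c.tail j = v) ∨ (∃ j, c.mode j = Mode.extended ∧ c.head j = some v)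

/-- Transitions of the time-independent model with Causal-PIBT winner
determination: when several requesting agents contest the same unoccupied node
`v`, the unique contestant with maximal temporal priority becomes extended
toward `v` and all other contestants revert to contracted, atomically. -/
inductive Step {A V P : Type*} [LinearOrder P] :
    Config A V P → Config A V P → Prop
  | toRequesting (c c' : Config A V P) (i : A) (u : V) :
      c.mode i = Mode.contracted →
      c'.mode i = Mode.requesting → c'.head i = some u → c'.tail i = c.tail i →
      (∀ j, j ≠ i → c'.mode j = c.mode j ∧ c'.tail j = c.tail j ∧ c'.head j = c.head j) →
      Step c c'
  | backToContracted (c c' : Config A V P) (i : A) :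
      c.mode i = Mode.requesting →
      c'.mode i = Mode.contracted → c'.head i = none → c'.tail i = c.tail i →
      (∀ j, j ≠ i → c'.mode j = c.mode j ∧ c'.tail j = c.tail j ∧ c'.head j = c.head j) →
      Step c c'
  | winner (c c' : Config A V P) (i : A) (v : V) :
      c.mode i = Mode.requesting → c.head i = some v → ¬ occupied c v →
      -- `i` has the strictly maximal temporal priority among the contestants
      (∀ j, j ≠ i → c.mode j = Mode.requesting → c.head j = some v →
        c.ptmp j < c.ptmp i) →
      -- `i` wins and becomes extended
      c'.mode i = Mode.extended → c'.head i = some v → c'.tail i = c.tail i →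
      -- all losing contestants revert to contracted, atomically
      (∀ j, j ≠ i → c.mode j = Mode.requesting → c.head j = some v →
        c'.mode j = Mode.contracted ∧ c'.head j = none ∧ c'.tail j = c.tail j) →
      -- every other agent is unchanged
      (∀ j, j ≠ i → ¬ (c.mode j = Mode.requesting ∧ c.head j = some v) →
        c'.mode j = c.mode j ∧ c'.tail j = c.tail j ∧ c'.head j = c.head j) →
      Step c c'
  | finishMove (c c' : Config A V P) (i : A) (u : V) :
      c.mode i = Mode.extended → c.head i = some u →
      c'.mode i = Mode.contracted → c'.head i = none → c'.tail i = u →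
      (∀ j, j ≠ i → c'.mode j = c.mode j ∧ c'.tail j = c.tail j ∧ c'.head j = c.head j) →
      Step c c'

/-! A node can only acquire an extended agent through a `winner` step, which requires the node
to be unoccupied, in particular free of extended agents, and extends exactly one agent toward it.
Every other transition only removes extended agents, so "at most one extended agent per node"
is an invariant, and it holds trivially when all agents are contracted. -/

namespace Config

variable {A V P : Type*}

def ExtendedToward (c : Config A V P) (v : V) (i : A) : Prop :=
  c.mode i = Mode.extended ∧ c.head i = some v

def AtMostOneExtendedPerNode (c : Config A V P) : Prop :=
  ∀ v i j, c.ExtendedToward v i → c.ExtendedToward v j → i = j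

theorem ExtendedToward.occupied {c : Config A V P} {v : V} {i : A}
    (h : c.ExtendedToward v i) : occupied c v :=
  Or.inr ⟨i, h⟩

theorem atMostOneExtendedPerNode_of_forall_contracted {c : Config A V P}
    (h : ∀ i, c.mode i = Mode.contracted) : c.AtMostOneExtendedPerNode := by
  intro v i _ hi
  exact absurd (h i ▸ hi.1) (by decide)

theorem extendedToward_of_frame {c c' : Config A V P} {i : A}
    (hi : c'.mode i ≠ Mode.extended)
    (hframe : ∀ j, j ≠ i → c'.mode j = c.mode j ∧ c'.tail j = c.tail j ∧ c'.head j = c.head j)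
    {v : V} {a : A} (ha : c'.ExtendedToward v a) : c.ExtendedToward v a := by
  have hai : a ≠ i := by rintro rfl; exact hi ha.1
  obtain ⟨hmode, -, hhead⟩ := hframe a hai
  exact ⟨hmode ▸ ha.1, hhead ▸ ha.2⟩

theorem extendedToward_of_winner_frame {c c' : Config A V P} {k : A} {v₀ : V}
    (hlose : ∀ j, j ≠ k → c.mode j = Mode.requesting → c.head j = some v₀ →
      c'.mode j = Mode.contracted ∧ c'.head j = none ∧ c'.tail j = c.tail j)
    (hrest : ∀ j, j ≠ k → ¬ (c.mode j = Mode.requesting ∧ c.head j = some v₀) →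
      c'.mode j = c.mode j ∧ c'.tail j = c.tail j ∧ c'.head j = c.head j)
    {v : V} {a : A} (hak : a ≠ k) (ha : c'.ExtendedToward v a) : c.ExtendedToward v a := by
  by_cases hcontest : c.mode a = Mode.requesting ∧ c.head a = some v₀
  · have hcontracted := (hlose a hak hcontest.1 hcontest.2).1
    exact absurd (hcontracted ▸ ha.1) (by decide)
  · obtain ⟨hmode, -, hhead⟩ := hrest a hak hcontest
    exact ⟨hmode ▸ ha.1, hhead ▸ ha.2⟩

end Config

namespace Step

open Config

variable {A V P : Type*} [LinearOrder P]

theorem extendedToward_or_unoccupied {c c' : Config A V P} (hstep : Step c c')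
    {v : V} {a : A} (ha : c'.ExtendedToward v a) :
    c.ExtendedToward v a ∨
      (¬ occupied c v ∧ ∀ b, b ≠ a → c'.ExtendedToward v b → c.ExtendedToward v b) := by
  cases hstep with
  | toRequesting i _ _ hi _ _ hframe =>
    exact Or.inl (extendedToward_of_frame (by rw [hi]; decide) hframe ha)
  | backToContracted i _ hi _ _ hframe =>
    exact Or.inl (extendedToward_of_frame (by rw [hi]; decide) hframe ha)
  | finishMove i _ _ _ hi _ _ hframe =>
    exact Or.inl (extendedToward_of_frame (by rw [hi]; decide) hframe ha)
  | winner k v₀ _ _ hfree _ _ hkhead _ hlose hrest =>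
    by_cases hak : a = k
    · subst hak
      obtain rfl : v₀ = v := Option.some.inj (hkhead.symm.trans ha.2)
      exact Or.inr ⟨hfree, fun b hb => extendedToward_of_winner_frame hlose hrest hb⟩
    · exact Or.inl (extendedToward_of_winner_frame hlose hrest hak ha)

theorem atMostOneExtendedPerNode {c c' : Config A V P} (hstep : Step c c')
    (hc : c.AtMostOneExtendedPerNode) : c'.AtMostOneExtendedPerNode := by
  intro v i j hi hj
  by_contra hij
  rcases hstep.extendedToward_or_unoccupied hi with hi' | ⟨hfree, hothers⟩
  · rcases hstep.extendedToward_or_unoccupied hj with hj' | ⟨hfree, -⟩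
    · exact hij (hc v i j hi' hj')
    · exact hfree hi'.occupied
  · exact hfree (hothers j (Ne.symm hij) hj).occupied

end Step

/-- Under the winner-determination rule of Causal-PIBT, starting from a
configuration in which all agents are contracted, in every reachable
configuration at most one agent is extended toward any given node. -/
theorem causalPIBT_at_most_one_extended_per_node
    {A V P : Type*} [LinearOrder P] (c₀ : Config A V P)
    (hmode₀ : ∀ i, c₀.mode i = Mode.contracted)
    (c : Config A V P)
    (hreach : Relation.ReflTransGen (Step (A := A) (V := V) (P := P)) c₀ c) :
    ∀ (v : V) (i j : A), c.mode i = Mode.extended → c.mode j = Mode.extended →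
      c.head i = some v → c.head j = some v → i = j := by
  have hinv : c.AtMostOneExtendedPerNode := by
    induction hreach with
    | refl => exact Config.atMostOneExtendedPerNode_of_forall_contracted hmode₀
    | tail _ hstep ih => exact hstep.atMostOneExtendedPerNode ih
  exact fun v i j hi hj hhi hhj => hinv v i j ⟨hi, hhi⟩ ⟨hj, hhj⟩
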